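/- Let B, G, R be pairwise disjoint sets of n points each, B ∪ G in general position, with every line through b ∈ B and g ∈ G containing a point of R outside segment [b, g]. Then the convex hull boundary of B ∪ G contains points of both colors. -/

import Mathlib

/-!
Suppose every green point lies in the convex hull of the other points of `B ∪ G`. Fix a red
point `r`. By general position a line through `r` meets `B ∪ G` at most twice, so `r` serves at
most `n` of the `n²` blue–green pairs; since the `n` red points serve all of them, each serves
exactly `n`. So the lines through `r` match every blue point with a green one and vice versa, `r`
lying outside each matched segment. If `r` were outside the hull, a tangent line from `r` would
contain such a matched pair and no other point, and its green point would be a vertex; hence all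
red points lie in the hull.

Now take a height function injective on `B ∪ G`. Its lowest and highest points are vertices,
hence blue. The lowest red point `r₀` lies strictly above the lowest blue point `b`, so the green
partner of `b` on a line through `r₀` lies below `r₀`. The red point on the line through the
highest blue point and the lowest green point `g` lies below `g`, hence below `r₀`: a
contradiction. Exchanging the colours gives a blue vertex.
-/

abbrev Pt := Fin 2 → ℝ

def GenPos (S : Set Pt) : Prop :=
  ∀ x ∈ S, ∀ y ∈ S, ∀ z ∈ S, x ≠ y → x ≠ z → y ≠ z → ¬ Collinear ℝ ({x, y, z} : Set Pt)

section Convex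

variable {𝕜 E : Type*} [Field 𝕜] [LinearOrder 𝕜] [IsStrictOrderedRing 𝕜] [AddCommGroup E]
  [Module 𝕜 E]

theorem mem_convexHull_setOf_eq_of_le (f : E →ₗ[𝕜] 𝕜) {s : Set E} {c : 𝕜}
    (hs : ∀ z ∈ s, c ≤ f z) {q : E} (hq : q ∈ convexHull 𝕜 s) (hfq : f q = c) :
    q ∈ convexHull 𝕜 {z ∈ s | f z = c} := by
  set F := convexHull 𝕜 {z ∈ s | f z = c}
  have hF : ∀ p ∈ F, f p = c := fun p hp =>
    convexHull_min (fun z hz => hz.2) (convex_hyperplane f.isLinear c) hp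
  have hle : ∀ p ∈ {p | c < f p} ∪ F, c ≤ f p := fun p hp =>
    hp.elim le_of_lt fun hp => (hF p hp).ge
  -- the open half-space together with the face `F` on its boundary is convex
  have hK : Convex 𝕜 ({p | c < f p} ∪ F) := by
    intro p hp p' hp' a b ha hb hab
    rcases ha.eq_or_lt with rfl | ha
    · rw [zero_add] at hab
      subst hab
      simpa using hp'
    rcases hb.eq_or_lt with rfl | hb
    · rw [add_zero] at hab
      subst hab
      simpa using hp
    by_cases hlt : c < f (a • p + b • p')
    · exact Or.inl hlt
    have hfp := hle p hp
    have hfp' := hle p' hp'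
    simp only [map_add, map_smul, smul_eq_mul, not_lt] at hlt
    have hmem : ∀ w ∈ {p | c < f p} ∪ F, f w = c → w ∈ F := fun w hw hfw =>
      hw.resolve_left fun h => h.ne' hfw
    have hc : a * c + b * c = c := by rw [← add_mul, hab, one_mul]
    have h1 := mul_le_mul_of_nonneg_left hfp ha.le
    have h2 := mul_le_mul_of_nonneg_left hfp' hb.le
    have hfp_eq : f p = c := le_antisymm (le_of_mul_le_mul_left (by linarith) ha) hfp
    have hfp'_eq : f p' = c := le_antisymm (le_of_mul_le_mul_left (by linarith) hb) hfp'
    exact Or.inr <| convex_convexHull 𝕜 _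
      (hmem p hp hfp_eq) (hmem p' hp' hfp'_eq) ha.le hb.le hab
  have hsK : s ⊆ {p | c < f p} ∪ F := fun z hz =>
    (hs z hz).lt_or_eq.imp id fun h => subset_convexHull 𝕜 _ ⟨hz, h.symm⟩
  exact (convexHull_min hsK hK hq).resolve_left (by simp [hfq])

theorem lt_of_mem_convexHull_of_forall_lt (f : E →ₗ[𝕜] 𝕜) {s : Set E} {x q : E}
    (hs : ∀ z ∈ s, z ≠ x → f x < f z) (hq : q ∈ convexHull 𝕜 s) (hqx : q ≠ x) : f x < f q := by
  have hle : ∀ z ∈ s, f x ≤ f z := fun z hz => by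
    rcases eq_or_ne z x with rfl | h
    · rfl
    · exact (hs z hz h).le
  have hxq : f x ≤ f q := convexHull_min hle (convex_halfSpace_ge f.isLinear _) hq
  refine hxq.lt_of_ne ?_
  intro hfq
  have hface : {z ∈ s | f z = f x} ⊆ {x} := fun z ⟨hz, hfz⟩ =>
    by_contra fun h => (hs z hz h).ne' hfz
  have := convexHull_mono hface (mem_convexHull_setOf_eq_of_le f hle hq hfq.symm)
  exact hqx (by simpa using this)

theorem notMem_convexHull_diff_of_forall_lt (f : E →ₗ[𝕜] 𝕜) {s : Set E} {x : E}
    (hs : ∀ z ∈ s, z ≠ x → f x < f z) : x ∉ convexHull 𝕜 (s \ {x}) := fun hx =>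
  lt_irrefl (f x) <|
    convexHull_min (fun z hz => hs z hz.1 hz.2) (convex_halfSpace_gt f.isLinear _) hx

theorem notMem_convexHull_diff_of_le (f : E →ₗ[𝕜] 𝕜) {s : Set E} {c : 𝕜} {p q : E}
    (hs : ∀ z ∈ s, c ≤ f z) (hface : ∀ z ∈ s, f z = c → z = p ∨ z = q) (hp : f p = c)
    (hpq : p ≠ q) : p ∉ convexHull 𝕜 (s \ {p}) := by
  intro h
  have hsub : {z ∈ s \ {p} | f z = c} ⊆ {q} := fun z ⟨⟨hz, hzp⟩, hfz⟩ =>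
    (hface z hz hfz).resolve_left hzp
  have := convexHull_mono hsub
    (mem_convexHull_setOf_eq_of_le f (fun z hz => hs z hz.1) h hp)
  exact hpq (by simpa using this)

theorem SameRay.apply_neg_of_apply_neg {u v : E} (h : SameRay 𝕜 u v) (f : E →ₗ[𝕜] 𝕜)
    (hv : v ≠ 0) (hu : f u < 0) : f v < 0 := by
  obtain ⟨t, ht, rfl⟩ := h.exists_pos_left (by rintro rfl; simp at hu) hv
  rw [map_smul, smul_eq_mul]
  exact mul_neg_of_pos_of_neg ht hu

end Convex

section OnLineOutside

variable {𝕜 E : Type*} [Field 𝕜] [LinearOrder 𝕜] [AddCommGroup E] [Module 𝕜 E]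

variable (𝕜) in
def OnLineOutside (r x y : E) : Prop :=
  Collinear 𝕜 ({x, y, r} : Set E) ∧ r ∉ segment 𝕜 x y

theorem OnLineOutside.symm {r x y : E} (h : OnLineOutside 𝕜 r x y) : OnLineOutside 𝕜 r y x :=
  ⟨by rw [Set.insert_comm]; exact h.1, by rw [segment_symm]; exact h.2⟩

theorem OnLineOutside.sameRay [IsStrictOrderedRing 𝕜] {r x y : E} (h : OnLineOutside 𝕜 r x y) :
    SameRay 𝕜 (x - r) (y - r) := by
  rcases h.1.wbtw_or_wbtw_or_wbtw with hw | hw | hw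
  · exact hw.symm.sameRay_vsub_left.symm
  · exact absurd (segment_symm 𝕜 x y ▸ mem_segment_iff_wbtw.2 hw) h.2
  · exact hw.sameRay_vsub_left

end OnLineOutside

def wedge (u : Pt) : Pt →ₗ[ℝ] ℝ := u 0 • LinearMap.proj 1 - u 1 • LinearMap.proj 0

@[simp]
theorem wedge_apply (u v : Pt) : wedge u v = u 0 * v 1 - u 1 * v 0 := rfl

theorem exists_eq_smul_of_wedge_eq_zero {u v : Pt} (hu : u ≠ 0) (h : wedge u v = 0) :
    ∃ t : ℝ, v = t • u := by
  rw [wedge_apply] at h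
  by_cases h0 : u 0 = 0
  · have h1 : u 1 ≠ 0 := fun h1 => hu (funext (Fin.forall_fin_two.2 ⟨h0, h1⟩))
    rw [h0, zero_mul, zero_sub, neg_eq_zero] at h
    refine ⟨v 1 / u 1, funext (Fin.forall_fin_two.2 ⟨?_, ?_⟩)⟩ <;>
      simp only [Pi.smul_apply, smul_eq_mul]
    · simpa [h0, h1] using h
    · field_simp
  · refine ⟨v 0 / u 0, funext (Fin.forall_fin_two.2 ⟨?_, ?_⟩)⟩ <;>
      simp only [Pi.smul_apply, smul_eq_mul] <;> field_simp
    linear_combination h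

theorem wedge_sub_eq_zero_iff_collinear {x z r : Pt} (hxr : x ≠ r) :
    wedge (x - r) (z - r) = 0 ↔ Collinear ℝ ({x, z, r} : Set Pt) := by
  rw [collinear_iff_of_mem (p₀ := r) (by simp)]
  constructor
  · intro h
    obtain ⟨t, ht⟩ := exists_eq_smul_of_wedge_eq_zero (sub_ne_zero.2 hxr) h
    refine ⟨x - r, ?_⟩
    simp only [Set.mem_insert_iff, Set.mem_singleton_iff, forall_eq_or_imp, forall_eq, vadd_eq_add]
    exact ⟨⟨1, by simp⟩, ⟨t, by rw [← ht]; abel⟩, ⟨0, by simp⟩⟩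
  · rintro ⟨v, hv⟩
    obtain ⟨s, hs⟩ := hv x (by simp)
    obtain ⟨t, ht⟩ := hv z (by simp)
    rw [vadd_eq_add] at hs ht
    rw [hs, ht, add_sub_cancel_right, add_sub_cancel_right]
    simp only [wedge_apply, Pi.smul_apply, smul_eq_mul]
    ring

theorem exists_forall_wedge_sub_nonneg {S : Finset Pt} (hS : S.Nonempty) {r : Pt}
    (hr : r ∉ convexHull ℝ (S : Set Pt)) : ∃ x ∈ S, ∀ z ∈ S, 0 ≤ wedge (x - r) (z - r) := by
  obtain ⟨f, u, hfr, hfS⟩ := geometric_hahn_banach_point_closed (convex_convexHull ℝ _)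
    (S.finite_toSet.isClosed_convexHull ℝ) hr
  have hpos : ∀ z ∈ S, 0 < f (z - r) := fun z hz => by
    rw [map_sub, sub_pos]
    exact hfr.trans (hfS z (subset_convexHull ℝ _ hz))
  set e : Pt := fun i => f fun j => if i = j then 1 else 0
  have hf : ∀ v, f v = e 0 * v 0 + e 1 * v 1 := fun v => by
    rw [← f.coe_coe, LinearMap.pi_apply_eq_sum_univ, Fin.sum_univ_two]
    simp only [smul_eq_mul, ContinuousLinearMap.coe_coe, e, mul_comm]
  -- the point of `S` seen from `r` under the smallest angle from the direction `e`
  obtain ⟨x, hx, hmin⟩ := S.exists_min_image (fun z => wedge e (z - r) / f (z - r)) hS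
  refine ⟨x, hx, fun z hz => ?_⟩
  have hxz := hmin z hz
  rw [div_le_div_iff₀ (hpos x hx) (hpos z hz)] at hxz
  have he : 0 < e 0 ^ 2 + e 1 ^ 2 := by
    by_contra! h
    have h0 : e 0 = 0 := pow_eq_zero_iff two_ne_zero |>.1 (by nlinarith [sq_nonneg (e 1)])
    have h1 : e 1 = 0 := pow_eq_zero_iff two_ne_zero |>.1 (by nlinarith [sq_nonneg (e 0)])
    simpa [hf, h0, h1] using hpos x hx
  have hcauchyBinet : (e 0 ^ 2 + e 1 ^ 2) * wedge (x - r) (z - r)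
      = f (x - r) * wedge e (z - r) - wedge e (x - r) * f (z - r) := by
    simp only [hf, wedge_apply]
    ring
  exact nonneg_of_mul_nonneg_right (by linarith) he

theorem exists_linearMap_injOn (S : Finset Pt) : ∃ f : Pt →ₗ[ℝ] ℝ, Set.InjOn f S := by
  classical
  obtain ⟨t, ht⟩ := Infinite.exists_notMem_finset
    ((S ×ˢ S).image fun p : Pt × Pt => (p.2 0 - p.1 0) / (p.1 1 - p.2 1))
  refine ⟨LinearMap.proj 0 + t • LinearMap.proj 1, fun x hx y hy hxy => ?_⟩
  simp only [LinearMap.add_apply, LinearMap.smul_apply, LinearMap.proj_apply, smul_eq_mul]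
    at hxy
  by_cases h1 : x 1 = y 1
  · exact funext (Fin.forall_fin_two.2 ⟨by rw [h1] at hxy; linarith, h1⟩)
  · refine absurd (Finset.mem_image.2 ⟨(x, y), Finset.mem_product.2 ⟨hx, hy⟩, ?_⟩) ht
    rw [div_eq_iff (sub_ne_zero.2 h1)]
    linear_combination -hxy

theorem GenPos.eq_of_collinear {S : Set Pt} (hS : GenPos S) {r x y z : Pt} (hr : r ∉ S)
    (hx : x ∈ S) (hy : y ∈ S) (hz : z ∈ S) (hxy : x ≠ y) (hxz : x ≠ z)
    (hxyr : Collinear ℝ ({x, y, r} : Set Pt)) (hxzr : Collinear ℝ ({x, z, r} : Set Pt)) :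
    y = z := by
  by_contra hyz
  have hxr : x ≠ r := by rintro rfl; exact hr hx
  refine hS x hx y hy z hz hxy hxz hyz (collinear_triple_of_mem_affineSpan_pair
    (left_mem_affineSpan_pair ℝ x r) ?_ ?_)
  · exact hxyr.mem_affineSpan_of_mem_of_ne (by simp) (by simp) (by simp) hxr
  · exact hxzr.mem_affineSpan_of_mem_of_ne (by simp) (by simp) (by simp) hxr

theorem GenPos.notMem_convexHull_diff_of_wedge_sub_nonneg {S : Set Pt} (hS : GenPos S)
    {r x y : Pt} (hr : r ∉ S) (hx : x ∈ S) (hy : y ∈ S) (hxy : x ≠ y)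
    (hxyr : Collinear ℝ ({x, y, r} : Set Pt)) (hsupp : ∀ z ∈ S, 0 ≤ wedge (x - r) (z - r)) :
    x ∉ convexHull ℝ (S \ {x}) ∧ y ∉ convexHull ℝ (S \ {y}) := by
  have hxr : x ≠ r := by rintro rfl; exact hr hx
  have hle : ∀ z ∈ S, wedge (x - r) r ≤ wedge (x - r) z := fun z hz => by
    simpa [map_sub] using hsupp z hz
  have hline : ∀ z, wedge (x - r) z = wedge (x - r) r ↔ Collinear ℝ ({x, z, r} : Set Pt) :=
    fun z => by rw [← wedge_sub_eq_zero_iff_collinear hxr, map_sub, sub_eq_zero]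
  have hface : ∀ z ∈ S, wedge (x - r) z = wedge (x - r) r → z = x ∨ z = y := fun z hz hzr =>
    or_iff_not_imp_left.2 fun hzx =>
      (hS.eq_of_collinear hr hx hy hz hxy (Ne.symm hzx) hxyr ((hline z).1 hzr)).symm
  have hxline : wedge (x - r) x = wedge (x - r) r := (hline x).2 (by
    simpa using collinear_pair ℝ x r)
  exact ⟨notMem_convexHull_diff_of_le _ hle hface hxline hxy,
    notMem_convexHull_diff_of_le _ hle (fun z hz h => (hface z hz h).symm)
      ((hline y).2 hxyr) hxy.symm⟩

theorem Finset.exists_forall_ne_lt_of_injOn {α β : Type*} [LinearOrder β] {s : Finset α}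
    (hs : s.Nonempty) {f : α → β} (hf : Set.InjOn f s) : ∃ x ∈ s, ∀ z ∈ s, z ≠ x → f x < f z := by
  obtain ⟨x, hx, hmin⟩ := s.exists_min_image f hs
  exact ⟨x, hx, fun z hz hzx => (hmin z hz).lt_of_ne fun h => hzx (hf hz hx h.symm)⟩

section Coloured

variable {n : ℕ} {B G R : Finset Pt} {r : Pt}

open Classical in
noncomputable def pairsThrough (B G : Finset Pt) (r : Pt) : Finset (Pt × Pt) :=
  (B ×ˢ G).filter fun p => OnLineOutside ℝ r p.1 p.2

theorem mem_pairsThrough {p : Pt × Pt} :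
    p ∈ pairsThrough B G r ↔ (p.1 ∈ B ∧ p.2 ∈ G) ∧ OnLineOutside ℝ r p.1 p.2 := by
  simp [pairsThrough]

theorem injOn_fst_pairsThrough (hgp : GenPos ↑(B ∪ G)) (hBG : Disjoint B G) (hr : r ∉ B ∪ G) :
    Set.InjOn Prod.fst (pairsThrough B G r : Set (Pt × Pt)) := by
  rintro ⟨b, g⟩ hp ⟨b', g'⟩ hp' (rfl : b = b')
  obtain ⟨⟨hb, hg⟩, hbg⟩ := mem_pairsThrough.1 hp
  obtain ⟨⟨-, hg'⟩, hbg'⟩ := mem_pairsThrough.1 hp'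
  have hbG : ∀ {x}, x ∈ G → b ≠ x := fun hx h => Finset.disjoint_left.1 hBG hb (h ▸ hx)
  exact Prod.ext rfl <| hgp.eq_of_collinear (by simpa using hr) (Finset.mem_union_left _ hb)
    (Finset.mem_union_right _ hg) (Finset.mem_union_right _ hg') (hbG hg) (hbG hg') hbg.1 hbg'.1

theorem injOn_snd_pairsThrough (hgp : GenPos ↑(B ∪ G)) (hBG : Disjoint B G) (hr : r ∉ B ∪ G) :
    Set.InjOn Prod.snd (pairsThrough B G r : Set (Pt × Pt)) := by
  rintro ⟨b, g⟩ hp ⟨b', g'⟩ hp' (rfl : g = g')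
  obtain ⟨⟨hb, hg⟩, hbg⟩ := mem_pairsThrough.1 hp
  obtain ⟨⟨hb', -⟩, hbg'⟩ := mem_pairsThrough.1 hp'
  have hgB : ∀ {x}, x ∈ B → g ≠ x := fun hx h => Finset.disjoint_left.1 hBG hx (h ▸ hg)
  exact Prod.ext (hgp.eq_of_collinear (by simpa using hr) (Finset.mem_union_right _ hg)
    (Finset.mem_union_left _ hb) (Finset.mem_union_left _ hb') (hgB hb) (hgB hb') hbg.symm.1
    hbg'.symm.1) rfl

theorem card_pairsThrough_eq (hB : B.card = n) (hG : G.card = n) (hR : R.card = n)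
    (hBG : Disjoint B G) (hR_out : ∀ r ∈ R, r ∉ B ∪ G) (hgp : GenPos ↑(B ∪ G))
    (hpierce : ∀ b ∈ B, ∀ g ∈ G, ∃ r ∈ R, OnLineOutside ℝ r b g) :
    ∀ r ∈ R, (pairsThrough B G r).card = n := by
  classical
  have hle : ∀ r ∈ R, (pairsThrough B G r).card ≤ n := fun r hr =>
    hB ▸ Finset.card_le_card_of_injOn Prod.fst (fun p hp => (mem_pairsThrough.1 hp).1.1)
      (injOn_fst_pairsThrough hgp hBG (hR_out r hr))
  have hcover : B ×ˢ G ⊆ R.biUnion (pairsThrough B G) := fun p hp => by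
    obtain ⟨hb, hg⟩ := Finset.mem_product.1 hp
    obtain ⟨r, hr, hbg⟩ := hpierce p.1 hb p.2 hg
    exact Finset.mem_biUnion.2 ⟨r, hr, mem_pairsThrough.2 ⟨⟨hb, hg⟩, hbg⟩⟩
  have hsum : ∑ r ∈ R, n ≤ ∑ r ∈ R, (pairsThrough B G r).card :=
    calc ∑ r ∈ R, n = (B ×ˢ G).card := by simp [hB, hG, hR]
      _ ≤ (R.biUnion (pairsThrough B G)).card := Finset.card_le_card hcover
      _ ≤ _ := Finset.card_biUnion_le
  exact (Finset.sum_eq_sum_iff_of_le hle).1 (le_antisymm (Finset.sum_le_sum hle) hsum)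

theorem exists_onLineOutside (hB : B.card = n) (hG : G.card = n) (hR : R.card = n)
    (hBG : Disjoint B G) (hR_out : ∀ r ∈ R, r ∉ B ∪ G) (hgp : GenPos ↑(B ∪ G))
    (hpierce : ∀ b ∈ B, ∀ g ∈ G, ∃ r ∈ R, OnLineOutside ℝ r b g) (hr : r ∈ R) :
    (∀ b ∈ B, ∃ g ∈ G, OnLineOutside ℝ r b g) ∧ (∀ g ∈ G, ∃ b ∈ B, OnLineOutside ℝ r b g) := by
  classical
  have hcard := card_pairsThrough_eq hB hG hR hBG hR_out hgp hpierce r hr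
  have hfst : (pairsThrough B G r).image Prod.fst = B :=
    Finset.eq_of_subset_of_card_le
      (Finset.image_subset_iff.2 fun p hp => (mem_pairsThrough.1 hp).1.1)
      (by rw [Finset.card_image_of_injOn (injOn_fst_pairsThrough hgp hBG (hR_out r hr)), hcard,
        hB])
  have hsnd : (pairsThrough B G r).image Prod.snd = G :=
    Finset.eq_of_subset_of_card_le
      (Finset.image_subset_iff.2 fun p hp => (mem_pairsThrough.1 hp).1.2)
      (by rw [Finset.card_image_of_injOn (injOn_snd_pairsThrough hgp hBG (hR_out r hr)), hcard,
        hG])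
  constructor
  · intro b hb
    obtain ⟨⟨b, g⟩, hp, rfl⟩ := Finset.mem_image.1 (hfst ▸ hb)
    exact ⟨g, (mem_pairsThrough.1 hp).1.2, (mem_pairsThrough.1 hp).2⟩
  · intro g hg
    obtain ⟨⟨b, g⟩, hp, rfl⟩ := Finset.mem_image.1 (hsnd ▸ hg)
    exact ⟨b, (mem_pairsThrough.1 hp).1.1, (mem_pairsThrough.1 hp).2⟩

theorem mem_convexHull_of_forall_mem_convexHull_diff (hBG : Disjoint B G)
    (hgp : GenPos ↑(B ∪ G)) (hne : (B ∪ G).Nonempty) (hr : r ∉ B ∪ G)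
    (hpartner : (∀ b ∈ B, ∃ g ∈ G, OnLineOutside ℝ r b g) ∧
      (∀ g ∈ G, ∃ b ∈ B, OnLineOutside ℝ r b g))
    (hcon : ∀ g ∈ G, g ∈ convexHull ℝ (↑(B ∪ G) \ {g})) :
    r ∈ convexHull ℝ ↑(B ∪ G) := by
  by_contra hout
  obtain ⟨x, hx, hsupp⟩ := exists_forall_wedge_sub_nonneg hne hout
  have hr' : r ∉ (↑(B ∪ G) : Set Pt) := by simpa using hr
  rcases Finset.mem_union.1 hx with hxB | hxG
  · obtain ⟨g, hg, hxg⟩ := hpartner.1 x hxB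
    exact (hgp.notMem_convexHull_diff_of_wedge_sub_nonneg hr' hx (Finset.mem_union_right _ hg)
      (fun h => Finset.disjoint_left.1 hBG hxB (h ▸ hg)) hxg.1 hsupp).2 (hcon g hg)
  · obtain ⟨b, hb, hbx⟩ := hpartner.2 x hxG
    exact (hgp.notMem_convexHull_diff_of_wedge_sub_nonneg hr' hx (Finset.mem_union_left _ hb)
      (fun h => Finset.disjoint_left.1 hBG hb (h ▸ hxG)) hbx.symm.1 hsupp).1 (hcon x hxG)

theorem mem_left_of_forall_lt (f : Pt →ₗ[ℝ] ℝ) {x : Pt} (hx : x ∈ B ∪ G)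
    (hmin : ∀ z ∈ B ∪ G, z ≠ x → f x < f z)
    (hcon : ∀ g ∈ G, g ∈ convexHull ℝ (↑(B ∪ G) \ {g})) : x ∈ B :=
  (Finset.mem_union.1 hx).resolve_right fun hxG =>
    notMem_convexHull_diff_of_forall_lt f hmin (hcon x hxG)

theorem exists_mem_right_notMem_convexHull_diff (hn : 2 ≤ n) (hB : B.card = n)
    (hG : G.card = n) (hR : R.card = n) (hBG : Disjoint B G) (hBR : Disjoint B R)
    (hGR : Disjoint G R) (hgp : GenPos ↑(B ∪ G))
    (hpierce : ∀ b ∈ B, ∀ g ∈ G, ∃ r ∈ R, OnLineOutside ℝ r b g) :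
    ∃ g ∈ G, g ∉ convexHull ℝ (↑(B ∪ G) \ {g}) := by
  by_contra! hcon
  have hR_out : ∀ r ∈ R, r ∉ B ∪ G := fun r hr hrBG => (Finset.mem_union.1 hrBG).elim
    (fun hrB => Finset.disjoint_left.1 hBR hrB hr) (fun hrG => Finset.disjoint_left.1 hGR hrG hr)
  have hne : ∀ {s : Finset Pt}, s.card = n → s.Nonempty := fun hs => Finset.card_pos.1 (by omega)
  have hpartner := fun r (hr : r ∈ R) => exists_onLineOutside hB hG hR hBG hR_out hgp hpierce hr
  have hS : (B ∪ G).Nonempty := (hne hB).mono Finset.subset_union_left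
  have hR_hull : ∀ r ∈ R, r ∈ convexHull ℝ ↑(B ∪ G) := fun r hr =>
    mem_convexHull_of_forall_mem_convexHull_diff hBG hgp hS (hR_out r hr) (hpartner r hr) hcon
  obtain ⟨f, hf⟩ := exists_linearMap_injOn (B ∪ G)
  obtain ⟨b₁, hb₁, hb₁_min⟩ := Finset.exists_forall_ne_lt_of_injOn hS hf
  obtain ⟨b₀, hb₀, hb₀_max⟩ := Finset.exists_forall_ne_lt_of_injOn hS (f := -f)
    fun x hx y hy h => hf hx hy (neg_inj.1 h)
  obtain ⟨rh, hrh, hrh_min⟩ := R.exists_min_image f (hne hR)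
  obtain ⟨g₁, hg₁, hg₁_min⟩ := G.exists_min_image f (hne hG)
  have hne_R : ∀ x ∈ B ∪ G, ∀ r ∈ R, x ≠ r := fun x hx r hr h => hR_out r hr (h ▸ hx)
  obtain ⟨y, hy, hb₁y⟩ := (hpartner rh hrh).1 b₁ (mem_left_of_forall_lt f hb₁ hb₁_min hcon)
  have hy_rh : f (y - rh) < 0 := hb₁y.sameRay.apply_neg_of_apply_neg f
    (sub_ne_zero.2 (hne_R y (Finset.mem_union_right _ hy) rh hrh)) <| by
      rw [map_sub, sub_neg]
      exact lt_of_mem_convexHull_of_forall_lt f hb₁_min (hR_hull rh hrh)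
        (hne_R b₁ hb₁ rh hrh).symm
  obtain ⟨r, hr, hb₀g₁⟩ := hpierce b₀ (mem_left_of_forall_lt (-f) hb₀ hb₀_max hcon) g₁ hg₁
  have hg₁_r : (-f) (g₁ - r) < 0 := hb₀g₁.sameRay.apply_neg_of_apply_neg (-f)
    (sub_ne_zero.2 (hne_R g₁ (Finset.mem_union_right _ hg₁) r hr)) <| by
      rw [map_sub, sub_neg]
      exact lt_of_mem_convexHull_of_forall_lt (-f) hb₀_max (hR_hull r hr)
        (hne_R b₀ hb₀ r hr).symm
  simp only [LinearMap.neg_apply, map_sub, sub_lt_zero] at hy_rh hg₁_r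
  linarith [hg₁_min y hy, hrh_min r hr]

end Coloured

theorem stmt14 (n : ℕ) (hn : 2 ≤ n) (B G R : Finset Pt)
    (hB : B.card = n) (hG : G.card = n) (hR : R.card = n)
    (hBG : Disjoint B G) (hBR : Disjoint B R) (hGR : Disjoint G R)
    (hgp : GenPos ↑(B ∪ G))
    (hpierce : ∀ b ∈ B, ∀ g ∈ G, ∃ r ∈ R,
      Collinear ℝ ({b, g, r} : Set Pt) ∧ r ∉ segment ℝ b g) :
    (∃ b ∈ B, b ∉ convexHull ℝ ((↑(B ∪ G) : Set Pt) \ {b})) ∧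
    (∃ g ∈ G, g ∉ convexHull ℝ ((↑(B ∪ G) : Set Pt) \ {g})) := by
  have hpierce' : ∀ g ∈ G, ∀ b ∈ B, ∃ r ∈ R, OnLineOutside ℝ r g b := fun g hg b hb =>
    (hpierce b hb g hg).imp fun _ => And.imp_right OnLineOutside.symm
  refine ⟨?_, exists_mem_right_notMem_convexHull_diff hn hB hG hR hBG hBR hGR hgp hpierce⟩
  rw [Finset.union_comm] at hgp ⊢
  exact exists_mem_right_notMem_convexHull_diff hn hG hB hR hBG.symm hGR hBR hgp hpierce'
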